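/- Let A be a finite linearly ordered set with minimal element ⊥, x, y : A → ℝ with x(a) ≠ y(a) for a ≠ ⊥, and let J be a finite set with disjoint subsets K and L. Let f, g : A^J → ℝ be functions such that f depends only on the coordinates in K and g only on the coordinates in L, with (unique) product-basis expansions f = ∑_{M⊆K, a_M} α_{M,a_M}·χ_{M,a_M} and g = ∑_{N⊆L, b_N} β_{N,b_N}·χ_{N,b_N}. Then the unique product-basis expansion of the pointwise product f·g has coefficients γ_{S,c_S} satisfying ∑_{S⊆J, c_S} |γ_{S,c_S}| ≤ (∑_{M,a_M} |α_{M,a_M}|)·(∑_{N,b_N} |β_{N,b_N}|); indeed f·g = ∑_{M,a_M} ∑_{N,b_N} α_{M,a_M}·β_{N,b_N}·χ_{M∪N, a_M∪b_N}. -/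
import Mathlib

set_option synthInstance.maxHeartbeats 1000000
set_option maxHeartbeats 1000000


open Finset

/-- The product-basis function `χ_{M,a_M}` associated to values `x, y : A → ℝ` (with
excluded letter `b0`, in applications the minimal element `⊥`):
`χ_{M,a_M}(σ) = ∏_{j∈M} (x (a_M j) if σ j ≥ a_M j, else y (a_M j))`. -/
noncomputable def pbChi {J A : Type*} [LinearOrder A] (x y : A → ℝ) (b0 : A)
    (p : Σ M : Finset J, ({j // j ∈ M} → {a : A // a ≠ b0})) : (J → A) → ℝ :=
  fun σ => ∏ j : {j // j ∈ p.1},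
    if ((p.2 j : A) ≤ σ (j : J)) then x (p.2 j) else y (p.2 j)

/-- Glue two tuples indexed by disjoint (or overlapping, preferring the first) finsets. -/
def glueTuple {J B : Type*} [DecidableEq J] {M N : Finset J}
    (aM : {j // j ∈ M} → B) (bN : {j // j ∈ N} → B) : {j // j ∈ M ∪ N} → B :=
  fun j => if h : (j : J) ∈ M then aM ⟨j, h⟩
    else bN ⟨j, (Finset.mem_union.mp j.2).resolve_left h⟩

section PBAux

variable {J A : Type*} [Fintype J] [DecidableEq J] [Fintype A] [LinearOrder A] [OrderBot A]

/-- The index type of the product basis. -/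
abbrev PBIdx (J A : Type*) [LinearOrder A] [OrderBot A] : Type _ :=
  Σ M : Finset J, ({j // j ∈ M} → {a : A // a ≠ (⊥ : A)})

/-- Encode an index as a total function `J → A`, extending with `⊥`. -/
def pbToFun (p : PBIdx J A) : J → A :=
  fun j => if h : j ∈ p.1 then (p.2 ⟨j, h⟩ : A) else ⊥

lemma pbToFun_inj : Function.Injective (pbToFun (J := J) (A := A)) := by
  rintro ⟨M, a⟩ ⟨N, b⟩ h
  have hMN : M = N := by
    ext j
    constructor
    · intro hj
      by_contra hj'
      have h1 := congrFun h j
      simp only [pbToFun, dif_pos hj, dif_neg hj'] at h1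
      exact (a ⟨j, hj⟩).2 h1
    · intro hj
      by_contra hj'
      have h1 := congrFun h j
      simp only [pbToFun, dif_neg hj', dif_pos hj] at h1
      exact (b ⟨j, hj⟩).2 h1.symm
  subst hMN
  simp only [Sigma.mk.inj_iff, heq_eq_eq, true_and]
  funext j
  have h1 := congrFun h (j : J)
  simp only [pbToFun, dif_pos j.2] at h1
  exact Subtype.ext (by simpa using h1)

variable (x y : A → ℝ)

/-- The per-coordinate factor. -/
noncomputable def pbU : A → A → ℝ :=
  fun b s => if b = ⊥ then 1 else if b ≤ s then x b else y b

lemma pbChi_eq_prod (p : PBIdx J A) (σ : J → A) :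
    pbChi x y ⊥ p σ = ∏ j, pbU x y (pbToFun p j) (σ j) := by
  rw [← Finset.prod_subset (Finset.subset_univ p.1)
      (by intro j _ hj; simp [pbU, pbToFun, hj]),
    ← Finset.prod_attach p.1 (fun j => pbU x y (pbToFun p j) (σ j))]
  unfold pbChi
  rw [Finset.univ_eq_attach]
  refine Finset.prod_congr rfl ?_
  intro j _
  have hj : pbToFun p (j : J) = (p.2 j : A) := by
    simp only [pbToFun, dif_pos j.2]
  rw [hj]
  simp [pbU, (p.2 j).2]

/-- Predecessor in a finite linear order (junk value if none exists). -/
noncomputable def pbPred (a : A) : A :=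
  if h : (Finset.univ.filter (fun b => b < a)).Nonempty then
    (Finset.univ.filter (fun b => b < a)).max' h else a

lemma pbPred_lt {a : A} (ha : a ≠ ⊥) : pbPred a < a := by
  have hne : (Finset.univ.filter (fun b => b < a)).Nonempty :=
    ⟨⊥, by simp [bot_lt_iff_ne_bot.mpr ha]⟩
  have := Finset.max'_mem _ hne
  simp only [Finset.mem_filter] at this
  simpa [pbPred, hne] using this.2

lemma le_pbPred {a b : A} (hb : b < a) : b ≤ pbPred a := by
  have hne : (Finset.univ.filter (fun c => c < a)).Nonempty :=
    ⟨b, by simp [hb]⟩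
  simpa [pbPred, hne] using Finset.le_max' _ b (by simp [hb])

/-- Dual weights for non-bot letters. -/
noncomputable def pbW1 : A → A → ℝ := fun a s =>
  ((if s = a then 1 else 0) - (if s = pbPred a then 1 else 0)) / (x a - y a)

/-- Dual weights. -/
noncomputable def pbW : A → A → ℝ := fun a s =>
  if a = ⊥ then
    (if s = ⊥ then 1 else 0) -
      ∑ b ∈ Finset.univ.filter (fun b => b ≠ (⊥ : A)), y b * pbW1 x y b s
  else pbW1 x y a s

lemma pbW1_dual (hxy : ∀ a : A, a ≠ ⊥ → x a ≠ y a) {a : A} (ha : a ≠ ⊥) (b : A) :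
    ∑ s, pbW1 x y a s * pbU x y b s = if a = b then 1 else 0 := by
  have hc : x a - y a ≠ 0 := sub_ne_zero.mpr (hxy a ha)
  have hsum : ∑ s, pbW1 x y a s * pbU x y b s
      = (pbU x y b a - pbU x y b (pbPred a)) / (x a - y a) := by
    have : ∀ s, pbW1 x y a s * pbU x y b s
        = (if s = a then pbU x y b s / (x a - y a) else 0)
          - (if s = pbPred a then pbU x y b s / (x a - y a) else 0) := by
      intro s
      have hne : a ≠ pbPred a := (pbPred_lt ha).ne'
      simp only [pbW1]
      by_cases h1 : s = a
      · have h2 : s ≠ pbPred a := fun h => hne (h1.symm.trans h)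
        simp only [if_pos h1, if_neg h2]
        ring
      · by_cases h2 : s = pbPred a
        · simp only [if_neg h1, if_pos h2]
          ring
        · simp only [if_neg h1, if_neg h2]
          ring
    rw [Finset.sum_congr rfl (fun s _ => this s), Finset.sum_sub_distrib,
      Finset.sum_ite_eq' Finset.univ a, Finset.sum_ite_eq' Finset.univ (pbPred a)]
    simp [sub_div]
  rw [hsum]
  have hpred := pbPred_lt (a := a) ha
  by_cases hb : b = ⊥
  · subst hb
    simp only [pbU, if_pos rfl]
    simp [ha]
  · simp only [pbU, if_neg hb]
    by_cases hab : a = b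
    · subst hab
      have h1 : a ≤ a := le_refl a
      have h2 : ¬ a ≤ pbPred a := not_le.mpr hpred
      simp [h1, h2, div_self hc]
    · rw [if_neg hab]
      by_cases hle : b ≤ pbPred a
      · have hba : b ≤ a := hle.trans hpred.le
        simp [hle, hba]
      · have hba : ¬ b ≤ a := by
          intro h
          rcases lt_or_eq_of_le h with h' | h'
          · exact hle (le_pbPred h')
          · exact hab h'.symm
        simp [hle, hba]

lemma pbW_dual (hxy : ∀ a : A, a ≠ ⊥ → x a ≠ y a) (a b : A) :
    ∑ s, pbW x y a s * pbU x y b s = if a = b then 1 else 0 := by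
  by_cases ha : a = ⊥
  · subst ha
    have hrw : ∀ s, pbW x y ⊥ s * pbU x y b s
        = (if s = ⊥ then pbU x y b s else 0)
          - ∑ c ∈ Finset.univ.filter (fun c => c ≠ (⊥ : A)),
              y c * (pbW1 x y c s * pbU x y b s) := by
      intro s
      simp only [pbW, eq_self_iff_true, if_true, sub_mul, Finset.sum_mul, ite_mul,
        one_mul, zero_mul, mul_assoc]
    rw [Finset.sum_congr rfl (fun s _ => hrw s), Finset.sum_sub_distrib,
      Finset.sum_ite_eq' Finset.univ (⊥ : A), Finset.sum_comm]
    have hinner : ∀ c ∈ Finset.univ.filter (fun c => c ≠ (⊥ : A)),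
        ∑ s, y c * (pbW1 x y c s * pbU x y b s)
          = y c * (if c = b then 1 else 0) := by
      intro c hc
      rw [← Finset.mul_sum, pbW1_dual x y hxy (by simpa using hc) b]
    rw [Finset.sum_congr rfl hinner]
    by_cases hb : b = ⊥
    · subst hb
      have : ∀ c ∈ Finset.univ.filter (fun c => c ≠ (⊥ : A)),
          y c * (if c = (⊥ : A) then (1:ℝ) else 0) = 0 := by
        intro c hc
        simp only [Finset.mem_filter] at hc
        simp [hc.2]
      rw [Finset.sum_congr rfl this]
      simp [pbU]
    · have hsum : ∑ c ∈ Finset.univ.filter (fun c => c ≠ (⊥ : A)),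
          y c * (if c = b then (1:ℝ) else 0) = y b := by
        rw [Finset.sum_congr rfl (fun c _ => by rw [mul_ite, mul_one, mul_zero]),
          Finset.sum_ite_eq' _ b]
        simp [hb]
      rw [hsum]
      have : ¬ b ≤ (⊥ : A) := by simpa [le_bot_iff] using hb
      simp [pbU, hb, this, Ne.symm hb]
  · simp only [pbW, if_neg ha]
    exact pbW1_dual x y hxy ha b

lemma pbDual_pi (hxy : ∀ a : A, a ≠ ⊥ → x a ≠ y a) (c d : J → A) :
    ∑ σ : J → A, (∏ j, pbW x y (c j) (σ j)) * (∏ j, pbU x y (d j) (σ j))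
      = if c = d then 1 else 0 := by
  have h1 : ∀ σ : J → A,
      (∏ j, pbW x y (c j) (σ j)) * (∏ j, pbU x y (d j) (σ j))
        = ∏ j, (pbW x y (c j) (σ j) * pbU x y (d j) (σ j)) :=
    fun σ => (Finset.prod_mul_distrib).symm
  rw [Finset.sum_congr rfl (fun σ _ => h1 σ), ← Fintype.piFinset_univ,
    ← Finset.prod_univ_sum (fun _ : J => (univ : Finset A))
      (fun j s => pbW x y (c j) s * pbU x y (d j) s)]
  rw [Finset.prod_congr rfl (fun j _ => pbW_dual x y hxy (c j) (d j))]
  by_cases h : c = d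
  · subst h; simp
  · obtain ⟨j, hj⟩ := Function.ne_iff.mp h
    rw [if_neg h]
    exact Finset.prod_eq_zero (Finset.mem_univ j) (by simp [hj])

lemma pb_expansion_unique (hxy : ∀ a : A, a ≠ ⊥ → x a ≠ y a)
    (γ γ' : PBIdx J A → ℝ)
    (h : ∀ σ, ∑ p, γ p * pbChi x y ⊥ p σ = ∑ p, γ' p * pbChi x y ⊥ p σ) :
    γ = γ' := by
  classical
  have key : ∀ δ : PBIdx J A → ℝ, ∀ p : PBIdx J A,
      ∑ σ : J → A, (∏ j, pbW x y (pbToFun p j) (σ j))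
        * (∑ q, δ q * pbChi x y ⊥ q σ) = δ p := by
    intro δ p
    simp_rw [Finset.mul_sum]
    rw [Finset.sum_comm]
    have hq : ∀ q : PBIdx J A,
        ∑ σ : J → A, (∏ j, pbW x y (pbToFun p j) (σ j))
          * (δ q * pbChi x y ⊥ q σ)
        = δ q * (if pbToFun p = pbToFun q then 1 else 0) := by
      intro q
      simp_rw [pbChi_eq_prod, mul_left_comm]
      rw [← Finset.mul_sum, pbDual_pi x y hxy]
    rw [Finset.sum_congr rfl (fun q _ => hq q)]
    have heq : ∀ q : PBIdx J A,
        (if pbToFun p = pbToFun q then (1:ℝ) else 0) = if p = q then 1 else 0 := by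
      intro q
      simp [pbToFun_inj.eq_iff]
    rw [Finset.sum_congr rfl (fun q _ => by rw [heq q, mul_ite, mul_one, mul_zero]),
      Finset.sum_ite_eq _ p]
    simp
  funext p
  rw [← key γ p, ← key γ' p]
  exact Finset.sum_congr rfl fun σ _ => by rw [h σ]

lemma pbChi_glue (p q : PBIdx J A) (hdisj : Disjoint p.1 q.1) (σ : J → A) :
    pbChi x y ⊥ p σ * pbChi x y ⊥ q σ
      = pbChi x y ⊥ ⟨p.1 ∪ q.1, glueTuple p.2 q.2⟩ σ := by
  simp_rw [pbChi_eq_prod, ← Finset.prod_mul_distrib]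
  refine Finset.prod_congr rfl fun j _ => ?_
  by_cases hM : j ∈ p.1
  · have hN : j ∉ q.1 := Finset.disjoint_left.mp hdisj hM
    have h1 : pbToFun (⟨p.1 ∪ q.1, glueTuple p.2 q.2⟩ : PBIdx J A) j
        = (p.2 ⟨j, hM⟩ : A) := by
      simp only [pbToFun, glueTuple, dif_pos (Finset.mem_union_left _ hM), dif_pos hM]
    have h2 : pbToFun p j = (p.2 ⟨j, hM⟩ : A) := by simp only [pbToFun, dif_pos hM]
    have h3 : pbToFun q j = ⊥ := by simp only [pbToFun, dif_neg hN]
    rw [h1, h2, h3]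
    simp [pbU]
  · by_cases hN : j ∈ q.1
    · have h1 : pbToFun (⟨p.1 ∪ q.1, glueTuple p.2 q.2⟩ : PBIdx J A) j
          = (q.2 ⟨j, hN⟩ : A) := by
        simp only [pbToFun, glueTuple, dif_pos (Finset.mem_union_right _ hN), dif_neg hM]
      have h2 : pbToFun p j = ⊥ := by simp only [pbToFun, dif_neg hM]
      have h3 : pbToFun q j = (q.2 ⟨j, hN⟩ : A) := by simp only [pbToFun, dif_pos hN]
      rw [h1, h2, h3]
      simp [pbU]
    · have hMN : j ∉ p.1 ∪ q.1 := by simp [hM, hN]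
      have h1 : pbToFun (⟨p.1 ∪ q.1, glueTuple p.2 q.2⟩ : PBIdx J A) j = ⊥ := by
        simp only [pbToFun, dif_neg hMN]
      have h2 : pbToFun p j = ⊥ := by simp only [pbToFun, dif_neg hM]
      have h3 : pbToFun q j = ⊥ := by simp only [pbToFun, dif_neg hN]
      rw [h1, h2, h3]
      simp [pbU]

end PBAux

/-- Submultiplicativity of the representational norm for functions with
disjoint domains: if `f` (dep. only on `K`) and `g` (dep. only on `L`), `K` and `L`
disjoint, have product-basis expansions with coefficients `α` and `β`, then
`f·g = ∑∑ α_{M,a_M} β_{N,b_N} χ_{M∪N, a_M∪b_N}`, and the coefficients `γ` of the (unique)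
product-basis expansion of `f·g` satisfy `∑|γ| ≤ (∑|α|)·(∑|β|)`. -/
theorem representational_norm_submultiplicative
    {J A : Type*} [Fintype J] [DecidableEq J] [Fintype A] [LinearOrder A] [OrderBot A]
    (x y : A → ℝ) (hxy : ∀ a : A, a ≠ ⊥ → x a ≠ y a)
    (K L : Finset J) (hKL : Disjoint K L)
    (f g : (J → A) → ℝ)
    (hfdep : ∀ σ τ : J → A, (∀ j ∈ K, σ j = τ j) → f σ = f τ)
    (hgdep : ∀ σ τ : J → A, (∀ j ∈ L, σ j = τ j) → g σ = g τ)
    (α β : (Σ M : Finset J, ({j // j ∈ M} → {a : A // a ≠ ⊥})) → ℝ)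
    (hαsupp : ∀ p, ¬ p.1 ⊆ K → α p = 0)
    (hβsupp : ∀ p, ¬ p.1 ⊆ L → β p = 0)
    (hf : ∀ σ, f σ = ∑ p, α p * pbChi x y ⊥ p σ)
    (hg : ∀ σ, g σ = ∑ p, β p * pbChi x y ⊥ p σ) :
    (∀ σ, f σ * g σ =
      ∑ p, ∑ q, α p * β q * pbChi x y ⊥ ⟨p.1 ∪ q.1, glueTuple p.2 q.2⟩ σ) ∧
    (∀ γ : (Σ M : Finset J, ({j // j ∈ M} → {a : A // a ≠ ⊥})) → ℝ,
      (∀ σ, f σ * g σ = ∑ p, γ p * pbChi x y ⊥ p σ) →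
      ∑ p, |γ p| ≤ (∑ p, |α p|) * (∑ p, |β p|)) := by
  classical
  have hpart1 : ∀ σ, f σ * g σ =
      ∑ p, ∑ q, α p * β q * pbChi x y ⊥ ⟨p.1 ∪ q.1, glueTuple p.2 q.2⟩ σ := by
    intro σ
    rw [hf σ, hg σ, Finset.sum_mul_sum]
    refine Finset.sum_congr rfl fun p _ => Finset.sum_congr rfl fun q _ => ?_
    by_cases hα : α p = 0
    · simp [hα]
    by_cases hβ : β q = 0
    · simp [hβ]
    have hpK : p.1 ⊆ K := not_not.mp (fun h => hα (hαsupp p h))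
    have hqL : q.1 ⊆ L := not_not.mp (fun h => hβ (hβsupp q h))
    have hdisj : Disjoint p.1 q.1 := hKL.mono hpK hqL
    rw [mul_mul_mul_comm, pbChi_glue x y p q hdisj σ]
  refine ⟨hpart1, ?_⟩
  intro γ hγ
  set key : PBIdx J A → PBIdx J A → PBIdx J A :=
    fun q r => ⟨q.1 ∪ r.1, glueTuple q.2 r.2⟩ with hkey
  set γ' : PBIdx J A → ℝ :=
    fun p => ∑ q, ∑ r, if key q r = p then α q * β r else 0 with hγ'
  have hexp : ∀ σ, ∑ p, γ' p * pbChi x y ⊥ p σ = f σ * g σ := by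
    intro σ
    rw [hpart1 σ]
    simp only [hγ', Finset.sum_mul, ite_mul, zero_mul]
    rw [Finset.sum_comm]
    refine Finset.sum_congr rfl fun q _ => ?_
    rw [Finset.sum_comm]
    refine Finset.sum_congr rfl fun r _ => ?_
    rw [Finset.sum_ite_eq _ (key q r)]
    simp [hkey]
  have hγγ' : γ = γ' :=
    pb_expansion_unique x y hxy γ γ' (fun σ => by rw [← hγ σ, hexp σ])
  rw [hγγ']
  calc ∑ p, |γ' p|
      ≤ ∑ p : PBIdx J A, ∑ q : PBIdx J A, ∑ r : PBIdx J A,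
          |if key q r = p then α q * β r else 0| := by
        refine Finset.sum_le_sum fun p _ => ?_
        refine (Finset.abs_sum_le_sum_abs _ _).trans ?_
        exact Finset.sum_le_sum fun q _ => Finset.abs_sum_le_sum_abs _ _
    _ = ∑ q : PBIdx J A, ∑ r : PBIdx J A, ∑ p : PBIdx J A,
          |if key q r = p then α q * β r else 0| := by
        rw [Finset.sum_comm]
        exact Finset.sum_congr rfl fun q _ => Finset.sum_comm
    _ = ∑ q : PBIdx J A, ∑ r : PBIdx J A, |α q| * |β r| := by
        refine Finset.sum_congr rfl fun q _ => Finset.sum_congr rfl fun r _ => ?_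
        have : ∀ p : PBIdx J A, |if key q r = p then α q * β r else 0|
            = if key q r = p then |α q * β r| else 0 := by
          intro p; split <;> simp
        rw [Finset.sum_congr rfl (fun p _ => this p), Finset.sum_ite_eq _ (key q r)]
        simp [abs_mul]
    _ = (∑ p, |α p|) * (∑ p, |β p|) := (Finset.sum_mul_sum _ _ _ _).symm
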